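/- arXiv:1202.3407 — 8 statements merged into one kernel-verified Lean document; each statement's English description precedes it below -/
import Mathlib

section
/- If an irreducible s-representation m of a compact Lie algebra h admits an h-invariant orthogonal complex structure J, then the element a_J := Σ_i [e_i, Je_i] (sum over an orthonormal basis of m) lies in the center of h and is nonzero; in particular h is not semisimple. -/
/-!
`a_J` is the trace, over a `B_m`-orthonormal basis, of the bilinear map `(v, w) ↦ [v, J w]`.
Since `ρ a` is skew and commutes with `J`, `[a, a_J]` is the trace of
`(v, w) ↦ [ρ a v, J w] + [v, J (ρ a w)]`, and the two terms cancel.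
Pairing with `B_h` and using the Jacobi identity together with the `J`-invariance of the bracket
gives `B_m(ρ(a_J) v, J v) = 2 ∑ᵢ B_h([v, eᵢ], [v, eᵢ])`, which is positive for some `v` because
faithfulness forces the bracket to be nonzero. A nonzero central element rules out semisimplicity.
-/

open Finset

section OrthonormalBasis

variable {ι M X : Type*} [Fintype ι] [DecidableEq ι] [AddCommGroup M] [Module ℝ M]
  [AddCommGroup X] [Module ℝ X] {B : M →ₗ[ℝ] M →ₗ[ℝ] ℝ} {e : Module.Basis ι ℝ M}

theorem sum_apply_basis_smul_basis (he : ∀ i j, B (e i) (e j) = if i = j then 1 else 0)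
    (v : M) : ∑ j, B v (e j) • e j = v := by
  have h : ∑ j, (B.flip (e j)).smulRight (e j) = LinearMap.id := e.ext fun i => by simp [he]
  simpa using congr($h v)

theorem eq_zero_of_forall_apply_basis_eq_zero
    (he : ∀ i j, B (e i) (e j) = if i = j then 1 else 0) {v : M} (hv : ∀ w, B v w = 0) :
    v = 0 := by
  rw [← sum_apply_basis_smul_basis he v]
  simp [hv]

theorem sum_apply_skew_basis_left (he : ∀ i j, B (e i) (e j) = if i = j then 1 else 0)
    (hB : ∀ u v, B u v = B v u) {A : M →ₗ[ℝ] M} (hA : ∀ u v, B (A u) v = -B u (A v))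
    (β : M →ₗ[ℝ] M →ₗ[ℝ] X) :
    ∑ i, β (A (e i)) (e i) = -∑ i, β (e i) (A (e i)) := by
  have expand : ∀ i, A (e i) = ∑ j, B (A (e i)) (e j) • e j :=
    fun i => (sum_apply_basis_smul_basis he _).symm
  calc ∑ i, β (A (e i)) (e i) = ∑ i, ∑ j, B (A (e i)) (e j) • β (e j) (e i) := by
        refine sum_congr rfl fun i _ => ?_
        conv_lhs => rw [expand i]
        simp only [map_sum, map_smul, LinearMap.coe_sum, Finset.sum_apply, LinearMap.smul_apply]
    _ = ∑ i, -∑ j, B (A (e i)) (e j) • β (e i) (e j) := by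
        rw [sum_comm]
        refine sum_congr rfl fun i _ => ?_
        rw [← sum_neg_distrib]
        refine sum_congr rfl fun j _ => ?_
        rw [hA, hB, neg_smul]
    _ = -∑ i, β (e i) (A (e i)) := by
        rw [sum_neg_distrib]
        congr 1
        refine sum_congr rfl fun i _ => ?_
        conv_rhs => rw [expand i]
        simp only [map_sum, map_smul]

end OrthonormalBasis

theorem eq_of_forall_apply_eq_of_pos {N : Type*} [AddCommGroup N] [Module ℝ N]
    {B : N →ₗ[ℝ] N →ₗ[ℝ] ℝ} (hpos : ∀ x, x ≠ 0 → 0 < B x x) {x y : N}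
    (h : ∀ a, B a x = B a y) : x = y := by
  by_contra hne
  have hxy := hpos (x - y) (sub_ne_zero.2 hne)
  rw [(B (x - y)).map_sub, h, sub_self] at hxy
  exact hxy.false

section SRepresentation

variable {ι H M : Type*} [Fintype ι] [DecidableEq ι] [LieRing H] [LieAlgebra ℝ H]
  [AddCommGroup M] [Module ℝ M] {ρ : H →ₗ[ℝ] M →ₗ[ℝ] M} {BH : H →ₗ[ℝ] H →ₗ[ℝ] ℝ}
  {BM : M →ₗ[ℝ] M →ₗ[ℝ] ℝ} {br : M →ₗ[ℝ] M →ₗ[ℝ] H} {J : M →ₗ[ℝ] M} {e : Module.Basis ι ℝ M}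

theorem br_swap (hBHpos : ∀ x : H, x ≠ 0 → 0 < BH x x) (hBMsym : ∀ u v : M, BM u v = BM v u)
    (hskew : ∀ (a : H) (u v : M), BM (ρ a u) v + BM u (ρ a v) = 0)
    (hbr : ∀ (a : H) (v w : M), BH a (br v w) = BM (ρ a v) w) (v w : M) :
    br w v = -br v w :=
  eq_of_forall_apply_eq_of_pos hBHpos fun a => by
    rw [map_neg, hbr, hbr, hBMsym (ρ a w)]
    linarith [hskew a v w]

theorem br_apply_J_apply_J (hBHpos : ∀ x : H, x ≠ 0 → 0 < BH x x)
    (hJequiv : ∀ (a : H) (v : M), J (ρ a v) = ρ a (J v))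
    (hJorth : ∀ u v : M, BM (J u) (J v) = BM u v)
    (hbr : ∀ (a : H) (v w : M), BH a (br v w) = BM (ρ a v) w) (v w : M) :
    br (J v) (J w) = br v w :=
  eq_of_forall_apply_eq_of_pos hBHpos fun a => by rw [hbr, hbr, ← hJequiv, hJorth]

theorem apply_J_skew (hJ2 : ∀ v : M, J (J v) = -v) (hJorth : ∀ u v : M, BM (J u) (J v) = BM u v)
    (u v : M) : BM (J u) v = -BM u (J v) := by
  conv_lhs => rw [← neg_neg v, ← hJ2 v, map_neg, hJorth]

noncomputable def aJ (br : M →ₗ[ℝ] M →ₗ[ℝ] H) (e : Module.Basis ι ℝ M) (J : M →ₗ[ℝ] M) : H :=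
  ∑ i, br (e i) (J (e i))

theorem lie_aJ_eq_zero (hBMsym : ∀ u v : M, BM u v = BM v u)
    (hskew : ∀ (a : H) (u v : M), BM (ρ a u) v + BM u (ρ a v) = 0)
    (he : ∀ i j, BM (e i) (e j) = if i = j then 1 else 0)
    (hJequiv : ∀ (a : H) (v : M), J (ρ a v) = ρ a (J v))
    (hequiv : ∀ (a : H) (v w : M), ⁅a, br v w⁆ = br (ρ a v) w + br v (ρ a w)) (x : H) :
    ⁅x, aJ br e J⁆ = 0 := by
  have hterm : ∀ i, ⁅x, br (e i) (J (e i))⁆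
      = br.compl₂ J (ρ x (e i)) (e i) + br.compl₂ J (e i) (ρ x (e i)) := fun i => by
    simp [hequiv, hJequiv]
  rw [aJ, lie_sum, sum_congr rfl fun i _ => hterm i, sum_add_distrib,
    sum_apply_skew_basis_left he hBMsym (fun u v => eq_neg_of_add_eq_zero_left (hskew x u v)),
    neg_add_cancel]

theorem apply_rho_aJ_apply_J (hBHsym : ∀ x y : H, BH x y = BH y x)
    (hBHpos : ∀ x : H, x ≠ 0 → 0 < BH x x) (hBMsym : ∀ u v : M, BM u v = BM v u)
    (hskew : ∀ (a : H) (u v : M), BM (ρ a u) v + BM u (ρ a v) = 0)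
    (he : ∀ i j, BM (e i) (e j) = if i = j then 1 else 0)
    (hJ2 : ∀ v : M, J (J v) = -v) (hJequiv : ∀ (a : H) (v : M), J (ρ a v) = ρ a (J v))
    (hJorth : ∀ u v : M, BM (J u) (J v) = BM u v)
    (hbr : ∀ (a : H) (v w : M), BH a (br v w) = BM (ρ a v) w)
    (hjacobi : ∀ u v w : M, ρ (br u v) w + ρ (br v w) u + ρ (br w u) v = 0) (v : M) :
    BM (ρ (aJ br e J) v) (J v) = 2 * ∑ i, BH (br v (e i)) (br v (e i)) := by
  have hjac : ∀ i, ρ (br v (J v)) (e i) = ρ (br v (e i)) (J v) - ρ (br (J v) (e i)) v := by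
    intro i
    have h := hjacobi v (J v) (e i)
    rw [br_swap hBHpos hBMsym hskew hbr v (e i), map_neg, LinearMap.neg_apply] at h
    linear_combination (norm := module) h
  have hfirst : ∀ i, BM (ρ (br v (e i)) (J v)) (J (e i)) = BH (br v (e i)) (br v (e i)) :=
    fun i => by rw [← hJequiv, hJorth, hbr]
  have hsecond : ∑ i, BM (ρ (br (J v) (e i)) v) (J (e i))
      = -∑ i, BH (br v (e i)) (br v (e i)) := by
    calc ∑ i, BM (ρ (br (J v) (e i)) v) (J (e i))
        = ∑ i, BH.compl₁₂ (br v) (br (J v)) (J (e i)) (e i) :=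
          sum_congr rfl fun i _ => by rw [LinearMap.compl₁₂_apply, hBHsym, hbr]
      _ = -∑ i, BH.compl₁₂ (br v) (br (J v)) (e i) (J (e i)) :=
          sum_apply_skew_basis_left he hBMsym (apply_J_skew hJ2 hJorth) _
      _ = -∑ i, BH (br v (e i)) (br v (e i)) := by
          simp [br_apply_J_apply_J hBHpos hJequiv hJorth hbr]
  calc BM (ρ (aJ br e J) v) (J v) = ∑ i, BM (ρ (br v (J v)) (e i)) (J (e i)) := by
        rw [← hbr, aJ, map_sum, LinearMap.sum_apply]
        exact sum_congr rfl fun i _ => by rw [hBHsym, hbr]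
    _ = ∑ i, BH (br v (e i)) (br v (e i)) - ∑ i, BM (ρ (br (J v) (e i)) v) (J (e i)) := by
        simp only [hjac, map_sub, LinearMap.sub_apply, hfirst, sum_sub_distrib]
    _ = 2 * ∑ i, BH (br v (e i)) (br v (e i)) := by
        rw [hsecond]
        ring

theorem exists_br_basis_ne_zero [Nontrivial H] (hfaith : Function.Injective ρ)
    (he : ∀ i j, BM (e i) (e j) = if i = j then 1 else 0)
    (hbr : ∀ (a : H) (v w : M), BH a (br v w) = BM (ρ a v) w) :
    ∃ v i, br v (e i) ≠ 0 := by
  by_contra! hzero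
  have hρ : ρ = 0 := by
    ext x v
    refine eq_zero_of_forall_apply_basis_eq_zero he fun w => ?_
    rw [← hbr, show br v = 0 from e.ext fun i => by simp [hzero], LinearMap.zero_apply, map_zero]
  obtain ⟨x, hx⟩ := exists_ne (0 : H)
  exact hx (hfaith (by simp [hρ]))

theorem aJ_ne_zero [Nontrivial H] (hfaith : Function.Injective ρ)
    (hBHsym : ∀ x y : H, BH x y = BH y x)
    (hBHpos : ∀ x : H, x ≠ 0 → 0 < BH x x) (hBMsym : ∀ u v : M, BM u v = BM v u)
    (hskew : ∀ (a : H) (u v : M), BM (ρ a u) v + BM u (ρ a v) = 0)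
    (he : ∀ i j, BM (e i) (e j) = if i = j then 1 else 0)
    (hJ2 : ∀ v : M, J (J v) = -v) (hJequiv : ∀ (a : H) (v : M), J (ρ a v) = ρ a (J v))
    (hJorth : ∀ u v : M, BM (J u) (J v) = BM u v)
    (hbr : ∀ (a : H) (v w : M), BH a (br v w) = BM (ρ a v) w)
    (hjacobi : ∀ u v w : M, ρ (br u v) w + ρ (br v w) u + ρ (br w u) v = 0) :
    aJ br e J ≠ 0 := by
  obtain ⟨v, i, hvi⟩ := exists_br_basis_ne_zero hfaith he hbr
  have hBHnonneg : ∀ x : H, 0 ≤ BH x x := fun x =>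
    (eq_or_ne x 0).elim (fun h => by simp [h]) fun h => (hBHpos x h).le
  have hpos : 0 < ∑ j, BH (br v (e j)) (br v (e j)) :=
    sum_pos' (fun j _ => hBHnonneg _) ⟨i, mem_univ i, hBHpos _ hvi⟩
  intro h0
  have hkey := apply_rho_aJ_apply_J hBHsym hBHpos hBMsym hskew he hJ2 hJequiv hJorth hbr hjacobi v
  rw [h0, map_zero, LinearMap.zero_apply, map_zero, LinearMap.zero_apply] at hkey
  linarith

end SRepresentation

theorem aJ_central_nonzero_not_semisimple_general
    {H M : Type*} [LieRing H] [LieAlgebra ℝ H] [Nontrivial H]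
    [AddCommGroup M] [Module ℝ M]
    (ρ : H →ₗ[ℝ] M →ₗ[ℝ] M)
    (hfaith : Function.Injective ρ)
    (BH : H →ₗ[ℝ] H →ₗ[ℝ] ℝ) (BM : M →ₗ[ℝ] M →ₗ[ℝ] ℝ)
    (hBHsym : ∀ x y : H, BH x y = BH y x)
    (hBHpos : ∀ x : H, x ≠ 0 → 0 < BH x x)
    (hBMsym : ∀ u v : M, BM u v = BM v u)
    (hskew : ∀ (a : H) (u v : M), BM (ρ a u) v + BM u (ρ a v) = 0)
    (n : ℕ) (e : Module.Basis (Fin n) ℝ M)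
    (hON : ∀ i j, BM (e i) (e j) = if i = j then 1 else 0)
    (J : M →ₗ[ℝ] M)
    (hJ2 : ∀ v : M, J (J v) = -v)
    (hJequiv : ∀ (a : H) (v : M), J (ρ a v) = ρ a (J v))
    (hJorth : ∀ u v : M, BM (J u) (J v) = BM u v)
    (br : M →ₗ[ℝ] M →ₗ[ℝ] H)
    (hbr : ∀ (a : H) (v w : M), BH a (br v w) = BM (ρ a v) w)
    (hequiv : ∀ (a : H) (v w : M), ⁅a, br v w⁆ = br (ρ a v) w + br v (ρ a w))
    (hjacobi : ∀ u v w : M, ρ (br u v) w + ρ (br v w) u + ρ (br w u) v = 0) :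
    (∀ a : H, ⁅a, ∑ i, br (e i) (J (e i))⁆ = 0) ∧
    (∑ i, br (e i) (J (e i))) ≠ 0 ∧
    ¬ LieAlgebra.IsSemisimple ℝ H := by
  have hcentral : ∀ a : H, ⁅a, aJ br e J⁆ = 0 :=
    lie_aJ_eq_zero hBMsym hskew hON hJequiv hequiv
  have hne : aJ br e J ≠ 0 :=
    aJ_ne_zero hfaith hBHsym hBHpos hBMsym hskew hON hJ2 hJequiv hJorth hbr hjacobi
  refine ⟨hcentral, hne, fun _ => hne ?_⟩
  rw [← LieSubmodule.mem_bot (R := ℝ) (L := H), ← LieAlgebra.center_eq_bot ℝ H]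
  exact (LieModule.mem_maxTrivSubmodule ℝ H H _).mpr hcentral

/-- If an irreducible s-representation `m` of a compact Lie algebra
`(h, B_h)` admits an `h`-invariant orthogonal complex structure `J`, then
`a_J := ∑ᵢ [eᵢ, Jeᵢ]` (sum over a `B_m`-orthonormal basis) is a nonzero central
element of `h`; in particular `h` is not semisimple. -/
theorem aJ_central_nonzero_not_semisimple
    {H M : Type*} [LieRing H] [LieAlgebra ℝ H] [Nontrivial H]
    [AddCommGroup M] [Module ℝ M]
    (ρ : H →ₗ[ℝ] M →ₗ[ℝ] M)
    (hρLie : ∀ (a b : H) (v : M), ρ ⁅a, b⁆ v = ρ a (ρ b v) - ρ b (ρ a v))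
    (hfaith : Function.Injective ρ)
    (BH : H →ₗ[ℝ] H →ₗ[ℝ] ℝ) (BM : M →ₗ[ℝ] M →ₗ[ℝ] ℝ)
    (hBHsym : ∀ x y : H, BH x y = BH y x)
    (hBHpos : ∀ x : H, x ≠ 0 → 0 < BH x x)
    (hBHinv : ∀ a x y : H, BH ⁅a, x⁆ y + BH x ⁅a, y⁆ = 0)
    (hBMsym : ∀ u v : M, BM u v = BM v u)
    (hBMpos : ∀ v : M, v ≠ 0 → 0 < BM v v)
    (hskew : ∀ (a : H) (u v : M), BM (ρ a u) v + BM u (ρ a v) = 0)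
    (hirr : ∀ p : Submodule ℝ M, (∀ (a : H), ∀ v ∈ p, ρ a v ∈ p) → p = ⊥ ∨ p = ⊤)
    (n : ℕ) (e : Module.Basis (Fin n) ℝ M)
    (hON : ∀ i j, BM (e i) (e j) = if i = j then 1 else 0)
    (J : M →ₗ[ℝ] M)
    (hJ2 : ∀ v : M, J (J v) = -v)
    (hJequiv : ∀ (a : H) (v : M), J (ρ a v) = ρ a (J v))
    (hJorth : ∀ u v : M, BM (J u) (J v) = BM u v)
    (br : M →ₗ[ℝ] M →ₗ[ℝ] H)
    (hbr : ∀ (a : H) (v w : M), BH a (br v w) = BM (ρ a v) w)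
    (hequiv : ∀ (a : H) (v w : M), ⁅a, br v w⁆ = br (ρ a v) w + br v (ρ a w))
    (hjacobi : ∀ u v w : M, ρ (br u v) w + ρ (br v w) u + ρ (br w u) v = 0) :
    (∀ a : H, ⁅a, ∑ i, br (e i) (J (e i))⁆ = 0) ∧
    (∑ i, br (e i) (J (e i))) ≠ 0 ∧
    ¬ LieAlgebra.IsSemisimple ℝ H :=
  aJ_central_nonzero_not_semisimple_general ρ hfaith BH BM hBHsym hBHpos hBMsym hskew n e hON J hJ2
    hJequiv hJorth br hbr hequiv hjacobi
end

section
/- The bracket on g = h ⊕ m defined by the Lie bracket on h, the action of h on m, and B_h(a,[v,w]) = B_m(av,w), satisfies the Jacobi identity if and only if the 4-form Σ_k ã_k ∧ ã_k vanishes, where {a_k} is a B_h-orthonormal basis of h and ã(u,v) := B_m(au,v). -/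
open scoped BigOperators

/-- The wedge product of two 2-forms, as a 4-linear expression. -/
def wedge2 {M : Type*} (α β : M → M → ℝ) (u v w z : M) : ℝ :=
  α u v * β w z - α u w * β v z + α u z * β v w
    + α v w * β u z - α v z * β u w + α w z * β u v

/-- The bracket on `g = h ⊕ m` (Lie bracket on `h`, action of `h` on
`m`, and `[v,w] ∈ h` defined by `B_h(a,[v,w]) = B_m(av,w)`) satisfies the Jacobi
identity (equivalently, its only nontrivial instance, with all three arguments in
`m`) if and only if the 4-form `∑ₖ ãₖ ∧ ãₖ` vanishes, where `{aₖ}` is a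
`B_h`-orthonormal basis of `h` and `ã(u,v) = B_m(au,v)`. -/
theorem jacobi_iff_casimir_four_form_vanishes
    {H M : Type*} [LieRing H] [LieAlgebra ℝ H]
    [AddCommGroup M] [Module ℝ M]
    (ρ : H →ₗ[ℝ] M →ₗ[ℝ] M)
    (hρLie : ∀ (a b : H) (v : M), ρ ⁅a, b⁆ v = ρ a (ρ b v) - ρ b (ρ a v))
    (hfaith : Function.Injective ρ)
    (BH : H →ₗ[ℝ] H →ₗ[ℝ] ℝ) (BM : M →ₗ[ℝ] M →ₗ[ℝ] ℝ)
    (hBHsym : ∀ x y : H, BH x y = BH y x)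
    (hBMsym : ∀ u v : M, BM u v = BM v u)
    (hBMnd : ∀ v : M, (∀ w : M, BM v w = 0) → v = 0)
    (hskew : ∀ (a : H) (u v : M), BM (ρ a u) v + BM u (ρ a v) = 0)
    (N : ℕ) (a : Fin N → H)
    (hON : ∀ k l, BH (a k) (a l) = if k = l then 1 else 0)
    (hcomp : ∀ x : H, x = ∑ k, BH (a k) x • a k)
    (br : M →ₗ[ℝ] M →ₗ[ℝ] H)
    (hbr : ∀ (b : H) (v w : M), BH b (br v w) = BM (ρ b v) w) :
    (∀ u v w : M, ρ (br u v) w + ρ (br v w) u + ρ (br w u) v = 0) ↔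
    (∀ u v w z : M,
      ∑ k, wedge2 (fun x y => BM (ρ (a k) x) y) (fun x y => BM (ρ (a k) x) y)
        u v w z = 0) := by

  have hA : ∀ (b : H) (u v : M), BM (ρ b u) v = - BM (ρ b v) u := by
    intro b u v
    have h1 := hskew b u v
    have h2 := hBMsym u (ρ b v)
    linarith
  have hbrsum : ∀ u v w : M, ρ (br u v) w = ∑ k, BM (ρ (a k) u) v • ρ (a k) w := by
    intro u v w
    calc ρ (br u v) w = ρ (∑ k, BH (a k) (br u v) • a k) w := by rw [← hcomp]
    _ = ∑ k, BM (ρ (a k) u) v • ρ (a k) w := by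
        simp only [map_sum, map_smul, LinearMap.sum_apply, LinearMap.smul_apply, hbr]
  have hpair : ∀ u v w z : M, BM (ρ (br u v) w) z
      = ∑ k, BM (ρ (a k) u) v * BM (ρ (a k) w) z := by
    intro u v w z
    rw [hbrsum]
    simp only [map_sum, map_smul, LinearMap.sum_apply, LinearMap.smul_apply, smul_eq_mul]
  have key : ∀ u v w z : M,
      ∑ k, wedge2 (fun x y => BM (ρ (a k) x) y) (fun x y => BM (ρ (a k) x) y) u v w z
      = 2 * BM (ρ (br u v) w + ρ (br v w) u + ρ (br w u) v) z := by
    intro u v w z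
    rw [map_add, map_add, LinearMap.add_apply, LinearMap.add_apply,
      hpair u v w z, hpair v w u z, hpair w u v z]
    rw [← Finset.sum_add_distrib, ← Finset.sum_add_distrib, Finset.mul_sum]
    apply Finset.sum_congr rfl
    intro k _
    simp only [wedge2]
    rw [hA (a k) w u]
    ring
  constructor
  · intro hJ u v w z
    rw [key, hJ u v w]
    simp
  · intro hW u v w
    apply hBMnd
    intro z
    have h := key u v w z
    rw [hW u v w z] at h
    linarith
end

section
/- For vectors u,v,w,z in m, the Jacobi obstruction satisfies B_m([[u,v],w] + [[v,w],u] + [[w,u],v], z) = (1/2) Σ_k (ã_k ∧ ã_k)(u,v,w,z), where {a_k} is a B_h-orthonormal basis of h and ã(u,v) = B_m(au,v). -/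
open scoped BigOperators

/-- For `u,v,w,z ∈ m`, the Jacobi obstruction satisfies
`B_m([[u,v],w] + [[v,w],u] + [[w,u],v], z) = (1/2) ∑ₖ (ãₖ ∧ ãₖ)(u,v,w,z)`,
where `{aₖ}` is a `B_h`-orthonormal basis of `h` and `ã(u,v) = B_m(au,v)`. -/
theorem jacobi_obstruction_eq_half_casimir_four_form
    {H M : Type*} [AddCommGroup H] [Module ℝ H]
    [AddCommGroup M] [Module ℝ M]
    (ρ : H →ₗ[ℝ] M →ₗ[ℝ] M)
    (BH : H →ₗ[ℝ] H →ₗ[ℝ] ℝ) (BM : M →ₗ[ℝ] M →ₗ[ℝ] ℝ)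
    (hBHsym : ∀ x y : H, BH x y = BH y x)
    (hBMsym : ∀ u v : M, BM u v = BM v u)
    (hskew : ∀ (a : H) (u v : M), BM (ρ a u) v + BM u (ρ a v) = 0)
    (N : ℕ) (a : Fin N → H)
    (hON : ∀ k l, BH (a k) (a l) = if k = l then 1 else 0)
    (hcomp : ∀ x : H, x = ∑ k, BH (a k) x • a k)
    (br : M →ₗ[ℝ] M →ₗ[ℝ] H)
    (hbr : ∀ (b : H) (v w : M), BH b (br v w) = BM (ρ b v) w) :
    ∀ u v w z : M,
      BM (ρ (br u v) w + ρ (br v w) u + ρ (br w u) v) z =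
        (1/2 : ℝ) *
          ∑ k, wedge2 (fun x y => BM (ρ (a k) x) y) (fun x y => BM (ρ (a k) x) y)
            u v w z := by
  intro u v w z
  have key : ∀ x y t s : M, BM (ρ (br x y) t) s
      = ∑ k, BM (ρ (a k) x) y * BM (ρ (a k) t) s := by
    intro x y t s
    conv_lhs => rw [hcomp (br x y)]
    simp [map_sum, hbr, mul_comm]
  have hs : ∀ k (p q : M), BM (ρ (a k) p) q = - BM (ρ (a k) q) p := by
    intro k p q
    have h := hskew (a k) p q
    rw [hBMsym p (ρ (a k) q)] at h
    linarith
  simp only [map_add, LinearMap.add_apply, key, ← Finset.sum_add_distrib,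
    Finset.mul_sum, wedge2]
  apply Finset.sum_congr rfl
  intro k _
  rw [hs k w u]
  ring
end

section
/- If m is an irreducible real representation of a compact Lie algebra h with (Λ⁴m)^h = 0, then m is an s-representation: the natural bracket on h ⊕ m satisfies the Jacobi identity. -/
open scoped BigOperators

/-- If `m` is an irreducible real representation of a compact Lie
algebra `(h,B_h)` with `(Λ⁴m)^h = 0` (no nonzero `h`-invariant alternating
4-forms), then `m` is an s-representation: the natural bracket on `h ⊕ m`,
defined via `B_h(a,[v,w]) = B_m(av,w)`, satisfies the Jacobi identity (whose only
nontrivial instance has all three arguments in `m`). -/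
theorem s_representation_of_no_invariant_four_forms
    {H M : Type*} [LieRing H] [LieAlgebra ℝ H]
    [AddCommGroup M] [Module ℝ M]
    (ρ : H →ₗ[ℝ] M →ₗ[ℝ] M)
    (hρLie : ∀ (a b : H) (v : M), ρ ⁅a, b⁆ v = ρ a (ρ b v) - ρ b (ρ a v))
    (hfaith : Function.Injective ρ)
    (hirr : ∀ p : Submodule ℝ M, (∀ (a : H), ∀ v ∈ p, ρ a v ∈ p) → p = ⊥ ∨ p = ⊤)
    (BH : H →ₗ[ℝ] H →ₗ[ℝ] ℝ) (BM : M →ₗ[ℝ] M →ₗ[ℝ] ℝ)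
    (hBHsym : ∀ x y : H, BH x y = BH y x)
    (hBHinv : ∀ a x y : H, BH ⁅a, x⁆ y + BH x ⁅a, y⁆ = 0)
    (hBMsym : ∀ u v : M, BM u v = BM v u)
    (hBMnd : ∀ v : M, (∀ w : M, BM v w = 0) → v = 0)
    (hskew : ∀ (a : H) (u v : M), BM (ρ a u) v + BM u (ρ a v) = 0)
    (N : ℕ) (a : Fin N → H)
    (hON : ∀ k l, BH (a k) (a l) = if k = l then 1 else 0)
    (hcomp : ∀ x : H, x = ∑ k, BH (a k) x • a k)
    (br : M →ₗ[ℝ] M →ₗ[ℝ] H)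
    (hbr : ∀ (b : H) (v w : M), BH b (br v w) = BM (ρ b v) w)
    (hforms : ∀ Ω : AlternatingMap ℝ M ℝ (Fin 4),
      (∀ (b : H) (u v w z : M),
        Ω ![ρ b u, v, w, z] + Ω ![u, ρ b v, w, z]
          + Ω ![u, v, ρ b w, z] + Ω ![u, v, w, ρ b z] = 0) → Ω = 0) :
    ∀ u v w : M, ρ (br u v) w + ρ (br v w) u + ρ (br w u) v = 0 := by
  classical
  -- extensionality via the orthonormal decomposition
  have hext : ∀ x y : H, (∀ b : H, BH b x = BH b y) → x = y := by
    intro x y h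
    rw [hcomp x, hcomp y]
    congr 1
    funext k
    rw [h]
  have hbr_skew : ∀ p q : M, br q p = - br p q := by
    intro p q
    apply hext
    intro b
    rw [map_neg, hbr, hbr]
    linarith [hskew b p q, hBMsym p (ρ b q)]
  -- pair symmetry
  have hpair : ∀ p q r s : M, BM (ρ (br p q) r) s = BM (ρ (br r s) p) q := by
    intro p q r s
    rw [← hbr, ← hbr, hBHsym]
  -- skewness in the first pair
  have hsk1 : ∀ p q r s : M, BM (ρ (br q p) r) s = - BM (ρ (br p q) r) s := by
    intro p q r s
    rw [hbr_skew p q]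
    simp [map_neg, LinearMap.neg_apply]
  -- skewness in the second pair
  have hsk2 : ∀ p q r s : M, BM (ρ (br p q) s) r = - BM (ρ (br p q) r) s := by
    intro p q r s
    rw [← hbr, ← hbr, hbr_skew r s, map_neg]
  -- equivariance of br
  have hequiv : ∀ (b : H) (p q : M), br (ρ b p) q + br p (ρ b q) = ⁅b, br p q⁆ := by
    intro b p q
    apply hext
    intro c
    have h0 := hBHinv b c (br p q)
    have h1 := hbr ⁅b, c⁆ p q
    have h2 := hskew b (ρ c p) q
    have h3 : BM (ρ ⁅b, c⁆ p) q = BM (ρ b (ρ c p)) q - BM (ρ c (ρ b p)) q := by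
      rw [hρLie]
      simp [map_sub, LinearMap.sub_apply]
    rw [map_add, hbr, hbr]
    linarith
  -- invariance (derivation property) of T
  have hdT : ∀ (b : H) (p q r s : M),
      BM (ρ (br (ρ b p) q) r) s + BM (ρ (br p (ρ b q)) r) s
        + BM (ρ (br p q) (ρ b r)) s + BM (ρ (br p q) r) (ρ b s) = 0 := by
    intro b p q r s
    have h1 : BM (ρ (br (ρ b p) q) r) s + BM (ρ (br p (ρ b q)) r) s
        = BH ⁅b, br p q⁆ (br r s) := by
      rw [← hbr, ← hbr, ← LinearMap.add_apply, ← map_add, hequiv]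
    have h2 : BM (ρ (br p q) (ρ b r)) s + BM (ρ (br p q) r) (ρ b s)
        = BH (br p q) ⁅b, br r s⁆ := by
      rw [← hbr, ← hbr, ← map_add, hequiv]
    linarith [hBHinv b (br p q) (br r s)]
  -- The candidate 4-form, as a plain function
  set G : M → M → M → M → ℝ := fun p q r s =>
    BM (ρ (br p q) r) s + BM (ρ (br q r) p) s + BM (ρ (br r p) q) s with hGdef
  have hG12 : ∀ p q r s : M, G q p r s = - G p q r s := by
    intro p q r s
    simp only [hGdef]
    linarith [hsk1 p q r s, hsk1 r p q s, hsk1 q r p s]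
  have hG23 : ∀ p q r s : M, G p r q s = - G p q r s := by
    intro p q r s
    simp only [hGdef]
    linarith [hsk1 r p q s, hsk1 q r p s, hsk1 p q r s]
  have hG34 : ∀ p q r s : M, G p q s r = - G p q r s := by
    intro p q r s
    simp only [hGdef]
    linarith [hsk2 p q r s, hpair q s p r, hsk1 r p q s, hpair s p q r, hsk2 q r p s]
  have hz01 : ∀ p r s : M, G p p r s = 0 := fun p r s => by linarith [hG12 p p r s]
  have hz12 : ∀ p q s : M, G p q q s = 0 := fun p q s => by linarith [hG23 p q q s]
  have hz23 : ∀ p q r : M, G p q r r = 0 := fun p q r => by linarith [hG34 p q r r]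
  have hz02 : ∀ p q s : M, G p q p s = 0 := fun p q s => by
    linarith [hG23 p p q s, hz01 p q s]
  have hz03 : ∀ p q r : M, G p q r p = 0 := fun p q r => by
    linarith [hG12 q p r p, hG23 q r p p, hz23 q r p]
  have hz13 : ∀ p q r : M, G p q r q = 0 := fun p q r => by
    linarith [hG23 p r q q, hz23 p r q]
  -- invariance of G
  have hdG : ∀ (b : H) (p q r s : M),
      G (ρ b p) q r s + G p (ρ b q) r s + G p q (ρ b r) s + G p q r (ρ b s) = 0 := by
    intro b p q r s
    have h1 := hdT b p q r s
    have h2 := hdT b q r p s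
    have h3 := hdT b r p q s
    simp only [hGdef]
    linarith
  -- Build the alternating 4-form
  let Ω : AlternatingMap ℝ M ℝ (Fin 4) :=
    { toFun := fun v => G (v 0) (v 1) (v 2) (v 3)
      map_update_add' := by
        intro _inst v i x y
        have hi : _inst = instDecidableEqFin 4 := Subsingleton.elim _ _
        subst hi
        simp only [hGdef]
        fin_cases i <;>
          simp [Function.update_apply, map_add, LinearMap.add_apply] <;> ring
      map_update_smul' := by
        intro _inst v i c x
        have hi : _inst = instDecidableEqFin 4 := Subsingleton.elim _ _
        subst hi
        simp only [hGdef]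
        fin_cases i <;>
          simp [Function.update_apply, map_smul, LinearMap.smul_apply, smul_eq_mul] <;> ring
      map_eq_zero_of_eq' := by
        intro v i j hvij hij
        show G (v 0) (v 1) (v 2) (v 3) = 0
        fin_cases i <;> fin_cases j
        · exact absurd rfl hij
        · rw [show v 0 = v 1 from hvij]; exact hz01 _ _ _
        · rw [show v 0 = v 2 from hvij]; exact hz02 _ _ _
        · rw [show v 0 = v 3 from hvij]; exact hz03 _ _ _
        · rw [show v 1 = v 0 from hvij]; exact hz01 _ _ _
        · exact absurd rfl hij
        · rw [show v 1 = v 2 from hvij]; exact hz12 _ _ _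
        · rw [show v 1 = v 3 from hvij]; exact hz13 _ _ _
        · rw [show v 2 = v 0 from hvij]; exact hz02 _ _ _
        · rw [show v 2 = v 1 from hvij]; exact hz12 _ _ _
        · exact absurd rfl hij
        · rw [show v 2 = v 3 from hvij]; exact hz23 _ _ _
        · rw [show v 3 = v 0 from hvij]; exact hz03 _ _ _
        · rw [show v 3 = v 1 from hvij]; exact hz13 _ _ _
        · rw [show v 3 = v 2 from hvij]; exact hz23 _ _ _
        · exact absurd rfl hij }
  have hΩval : ∀ p q r s : M, Ω ![p, q, r, s] = G p q r s := by
    intro p q r s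
    rfl
  have hΩ0 : Ω = 0 := by
    apply hforms
    intro b p q r s
    rw [hΩval, hΩval, hΩval, hΩval]
    exact hdG b p q r s
  intro u v w
  apply hBMnd
  intro z
  have h0 : G u v w z = 0 := by
    rw [← hΩval, hΩ0]
    simp
  have h1 : BM (ρ (br u v) w + ρ (br v w) u + ρ (br w u) v) z = G u v w z := by
    simp only [hGdef, map_add, LinearMap.add_apply]
  rw [h1, h0]
end

section
/- Let m₁, m₂ be real inner product spaces of dimension ≥ 2, and identify m = m₁ ⊗ m₂ with linear maps L(m₁,m₂). The 4-form Ω := β(R), where R(u,v,w,z) := tr((uv* - vu*)(wz* - zw*)) and β is the Bianchi sum, is a nonzero so(m₁) ⊕ so(m₂)-invariant element of Λ⁴(m₁ ⊗ m₂). -/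
open scoped RealInnerProductSpace

variable {E F : Type*}
  [NormedAddCommGroup E] [InnerProductSpace ℝ E] [FiniteDimensional ℝ E]
  [NormedAddCommGroup F] [InnerProductSpace ℝ F] [FiniteDimensional ℝ F]

/-- `R(u,v,w,z) = tr((uv* - vu*)(wz* - zw*))` on `L(m₁,m₂)`. -/
noncomputable def Rquad (u v w z : E →ₗ[ℝ] F) : ℝ :=
  LinearMap.trace ℝ F
    ((u ∘ₗ LinearMap.adjoint v - v ∘ₗ LinearMap.adjoint u) ∘ₗ
      (w ∘ₗ LinearMap.adjoint z - z ∘ₗ LinearMap.adjoint w))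

/-- `Ω = β(R)`, the Bianchi sum of `R`. -/
noncomputable def OmegaR (u v w z : E →ₗ[ℝ] F) : ℝ :=
  Rquad u v w z + Rquad v w u z + Rquad w u v z

/-- The rank one map `x ⊗ y : m₁ → m₂`, `e ↦ ⟨x,e⟩ y`. -/
noncomputable def tmap (x : E) (y : F) : E →ₗ[ℝ] F :=
  (innerSL ℝ x).toLinearMap.smulRight y

/-!
Every element of `so(m₁) ⊕ so(m₂)` acts on 4-linear forms on `L(m₁,m₂)` as a derivation, and
the basic form `tr(u v* w z*)` is already invariant: for `A` skew on `m₁` one has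
`(uA) v* = -u (vA)*`, and for `B` skew on `m₂` the four terms telescope to
`tr(BX) - tr(XB) = 0`. Invariance survives the antisymmetrisations that produce `R` and the
Bianchi sum `β`. On rank one maps `tr(u v* w z*)` is a product of four inner products, which
makes `Ω` computable on orthonormal vectors.
-/

open LinearMap

section Invariance

variable {M : Type*}

/-- `f` is annihilated by the derivation induced by `φ`, i.e. invariant under a Lie algebra element
acting on `M` by `φ`. -/
def IsInfinitesimallyInvariant (φ : M → M) (f : M → M → M → M → ℝ) : Prop :=
  ∀ u v w z, f (φ u) v w z + f u (φ v) w z + f u v (φ w) z + f u v w (φ z) = 0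

def antisymmPairs (f : M → M → M → M → ℝ) (u v w z : M) : ℝ :=
  f u v w z - f u v z w - f v u w z + f v u z w

def bianchi (f : M → M → M → M → ℝ) (u v w z : M) : ℝ :=
  f u v w z + f v w u z + f w u v z

variable {φ : M → M} {f : M → M → M → M → ℝ}

theorem IsInfinitesimallyInvariant.antisymmPairs (h : IsInfinitesimallyInvariant φ f) :
    IsInfinitesimallyInvariant φ (antisymmPairs f) := by
  intro u v w z
  have := h u v w z
  have := h u v z w
  have := h v u w z
  have := h v u z w
  simp only [_root_.antisymmPairs]
  linarith

theorem IsInfinitesimallyInvariant.bianchi (h : IsInfinitesimallyInvariant φ f) :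
    IsInfinitesimallyInvariant φ (bianchi f) := by
  intro u v w z
  have := h u v w z
  have := h v w u z
  have := h w u v z
  simp only [_root_.bianchi]
  linarith

end Invariance

noncomputable def traceProd (u v w z : E →ₗ[ℝ] F) : ℝ :=
  trace ℝ F (u ∘ₗ adjoint v ∘ₗ w ∘ₗ adjoint z)

theorem Rquad_eq_antisymmPairs : Rquad (E := E) (F := F) = antisymmPairs traceProd := by
  ext u v w z
  simp only [Rquad, antisymmPairs, traceProd, sub_comp, comp_sub, map_sub, comp_assoc]
  ring

theorem isInfinitesimallyInvariant_OmegaR {φ : (E →ₗ[ℝ] F) → E →ₗ[ℝ] F}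
    (h : IsInfinitesimallyInvariant φ traceProd) : IsInfinitesimallyInvariant φ OmegaR := by
  have : OmegaR = bianchi (Rquad (E := E) (F := F)) := rfl
  rw [this, Rquad_eq_antisymmPairs]
  exact h.antisymmPairs.bianchi

theorem adjoint_eq_neg_of_skew {G : Type*} [NormedAddCommGroup G]
    [InnerProductSpace ℝ G] [FiniteDimensional ℝ G] {A : G →ₗ[ℝ] G}
    (hA : ∀ x y : G, ⟪A x, y⟫ + ⟪x, A y⟫ = 0) : adjoint A = -A := by
  refine ((eq_adjoint_iff _ _).mpr fun x y => ?_).symm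
  rw [LinearMap.neg_apply, inner_neg_left, neg_eq_iff_add_eq_zero, hA]

theorem isInfinitesimallyInvariant_traceProd_comp_right {A : E →ₗ[ℝ] E}
    (hA : adjoint A = -A) : IsInfinitesimallyInvariant (· ∘ₗ A) (traceProd (F := F)) := by
  intro u v w z
  simp only [traceProd, adjoint_comp, hA, comp_neg, neg_comp, map_neg, comp_assoc]
  ring

theorem isInfinitesimallyInvariant_traceProd_comp_left {B : F →ₗ[ℝ] F}
    (hB : adjoint B = -B) : IsInfinitesimallyInvariant (B ∘ₗ ·) (traceProd (E := E)) := by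
  intro u v w z
  simp only [traceProd, adjoint_comp, hB, comp_neg, neg_comp, map_neg, comp_assoc]
  rw [trace_comp_comm' (u ∘ₗ adjoint v ∘ₗ w ∘ₗ adjoint z) B]
  simp only [comp_assoc]
  ring

theorem adjoint_tmap (x : E) (y : F) : adjoint (tmap x y) = tmap y x := by
  refine ((eq_adjoint_iff _ _).mpr fun f e => ?_).symm
  simp only [tmap, ContinuousLinearMap.coe_coe, smulRight_apply, innerSL_apply_apply,
    inner_smul_left, inner_smul_right, RCLike.conj_to_real, real_inner_comm]
  ring

theorem tmap_comp_tmap {X Y Z : Type*} [NormedAddCommGroup X] [InnerProductSpace ℝ X]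
    [NormedAddCommGroup Y] [InnerProductSpace ℝ Y] [NormedAddCommGroup Z] [InnerProductSpace ℝ Z]
    (a : X) (b : Y) (c : Z) (d : X) : tmap a b ∘ₗ tmap c d = ⟪a, d⟫ • tmap c b := by
  ext e
  simp only [tmap, comp_apply, LinearMap.smul_apply, ContinuousLinearMap.coe_coe, smulRight_apply,
    innerSL_apply_apply, inner_smul_right, mul_comm, smul_smul]

theorem trace_tmap (a b : E) : trace ℝ E (tmap a b) = ⟪a, b⟫ :=
  trace_smulRight _ _

theorem traceProd_tmap (a c e g : E) (b d f h : F) :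
    traceProd (tmap a b) (tmap c d) (tmap e f) (tmap g h) = ⟪a, c⟫ * ⟪d, f⟫ * ⟪e, g⟫ * ⟪h, b⟫ := by
  simp only [traceProd, adjoint_tmap, tmap_comp_tmap, comp_smul, map_smul,
    trace_tmap, smul_eq_mul]
  ring

theorem OmegaR_tmap_of_orthonormal {x : Fin 2 → E} (hx : Orthonormal ℝ x) {y : Fin 2 → F}
    (hy : Orthonormal ℝ y) :
    OmegaR (tmap (x 0) (y 0)) (tmap (x 0) (y 1)) (tmap (x 1) (y 0)) (tmap (x 1) (y 1)) = -2 := by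
  have hx' := orthonormal_iff_ite.mp hx
  have hy' := orthonormal_iff_ite.mp hy
  norm_num [OmegaR, Rquad_eq_antisymmPairs, antisymmPairs, traceProd_tmap, hx', hy', hx.1, hy.1]

theorem exists_orthonormal_fin_two {G : Type*} [NormedAddCommGroup G] [InnerProductSpace ℝ G]
    [FiniteDimensional ℝ G] (h : 2 ≤ Module.finrank ℝ G) : ∃ x : Fin 2 → G, Orthonormal ℝ x :=
  ⟨_, (stdOrthonormalBasis ℝ G).orthonormal.comp _ (Fin.castLE_injective h)⟩

/-- For real inner product spaces `m₁, m₂` of dimension `≥ 2`,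
identifying `m₁ ⊗ m₂` with `L(m₁,m₂)`, the 4-form `Ω = β(R)` with
`R(u,v,w,z) = tr((uv* - vu*)(wz* - zw*))` is a nonzero
`so(m₁) ⊕ so(m₂)`-invariant element of `Λ⁴(m₁ ⊗ m₂)`; its nonvanishing is
witnessed on `(x₁⊗y₁, x₁⊗y₂, x₂⊗y₁, x₂⊗y₂)` for orthonormal `x₁,x₂` and
`y₁,y₂`. -/
theorem OmegaR_invariant_nonzero
    (hE : 2 ≤ Module.finrank ℝ E) (hF : 2 ≤ Module.finrank ℝ F) :
    (∀ A : E →ₗ[ℝ] E, (∀ x y : E, ⟪A x, y⟫ + ⟪x, A y⟫ = 0) →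
      ∀ u v w z : E →ₗ[ℝ] F,
        OmegaR (u ∘ₗ A) v w z + OmegaR u (v ∘ₗ A) w z
          + OmegaR u v (w ∘ₗ A) z + OmegaR u v w (z ∘ₗ A) = 0) ∧
    (∀ B : F →ₗ[ℝ] F, (∀ x y : F, ⟪B x, y⟫ + ⟪x, B y⟫ = 0) →
      ∀ u v w z : E →ₗ[ℝ] F,
        OmegaR (B ∘ₗ u) v w z + OmegaR u (B ∘ₗ v) w z
          + OmegaR u v (B ∘ₗ w) z + OmegaR u v w (B ∘ₗ z) = 0) ∧
    (∀ x : Fin 2 → E, Orthonormal ℝ x → ∀ y : Fin 2 → F, Orthonormal ℝ y →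
      OmegaR (tmap (x 0) (y 0)) (tmap (x 0) (y 1))
        (tmap (x 1) (y 0)) (tmap (x 1) (y 1)) ≠ 0) ∧
    (∃ u v w z : E →ₗ[ℝ] F, OmegaR u v w z ≠ 0) := by
  have nonzero : ∀ x : Fin 2 → E, Orthonormal ℝ x → ∀ y : Fin 2 → F, Orthonormal ℝ y →
      OmegaR (tmap (x 0) (y 0)) (tmap (x 0) (y 1)) (tmap (x 1) (y 0)) (tmap (x 1) (y 1)) ≠ 0 :=
    fun x hx y hy => by rw [OmegaR_tmap_of_orthonormal hx hy]; norm_num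
  obtain ⟨x, hx⟩ := exists_orthonormal_fin_two hE
  obtain ⟨y, hy⟩ := exists_orthonormal_fin_two hF
  exact ⟨fun A hA => isInfinitesimallyInvariant_OmegaR
      (isInfinitesimallyInvariant_traceProd_comp_right (adjoint_eq_neg_of_skew hA)),
    fun B hB => isInfinitesimallyInvariant_OmegaR
      (isInfinitesimallyInvariant_traceProd_comp_left (adjoint_eq_neg_of_skew hB)),
    nonzero, _, _, _, _, nonzero x hx y hy⟩
end

section
/- If m is an irreducible real representation of a Lie algebra h = h₁ ⊕ h₂ with both ideals h₁, h₂ acting nontrivially, and dim m ≥ 4, then (Λ⁴m)^h ≠ 0. -/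
open scoped RealInnerProductSpace

open TensorProduct

namespace InvFourForm

variable {M₁ M₂ : Type*}
  [NormedAddCommGroup M₁] [InnerProductSpace ℝ M₁]
  [NormedAddCommGroup M₂] [InnerProductSpace ℝ M₂]

/-- The tensor-product inner product as a bilinear form on `M₁ ⊗ M₂`. -/
noncomputable def gM : TensorProduct ℝ M₁ M₂ →ₗ[ℝ] TensorProduct ℝ M₁ M₂ →ₗ[ℝ] ℝ :=
  LinearMap.BilinForm.tmul (innerₗ M₁) (innerₗ M₂)

@[simp] lemma gM_tmul (x x' : M₁) (y y' : M₂) :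
    gM (x ⊗ₜ[ℝ] y) (x' ⊗ₜ[ℝ] y') = ⟪x, x'⟫ * ⟪y, y'⟫ := by
  simp [gM, mul_comm]

/-- The swap of the second tensor factors on `(M₁⊗M₂) ⊗ (M₁⊗M₂)`. -/
noncomputable def sw : TensorProduct ℝ (TensorProduct ℝ M₁ M₂) (TensorProduct ℝ M₁ M₂) →ₗ[ℝ]
    TensorProduct ℝ (TensorProduct ℝ M₁ M₂) (TensorProduct ℝ M₁ M₂) :=
  (TensorProduct.tensorTensorTensorComm ℝ M₁ M₂ M₁ M₂).symm.toLinearMap ∘ₗ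
    (LinearMap.lTensor (TensorProduct ℝ M₁ M₁) (TensorProduct.comm ℝ M₂ M₂).toLinearMap) ∘ₗ
    (TensorProduct.tensorTensorTensorComm ℝ M₁ M₂ M₁ M₂).toLinearMap

@[simp] lemma sw_tmul (x x' : M₁) (y y' : M₂) :
    sw ((x ⊗ₜ[ℝ] y) ⊗ₜ[ℝ] (x' ⊗ₜ[ℝ] y')) = (x ⊗ₜ[ℝ] y') ⊗ₜ[ℝ] (x' ⊗ₜ[ℝ] y) := by
  simp [sw, TensorProduct.tensorTensorTensorComm_symm]

/-- The bilinear form `gM ⊗ gM` on `(M₁⊗M₂) ⊗ (M₁⊗M₂)`. -/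
noncomputable def B2 : TensorProduct ℝ (TensorProduct ℝ M₁ M₂) (TensorProduct ℝ M₁ M₂) →ₗ[ℝ]
    TensorProduct ℝ (TensorProduct ℝ M₁ M₂) (TensorProduct ℝ M₁ M₂) →ₗ[ℝ] ℝ :=
  LinearMap.BilinForm.tmul (gM (M₁ := M₁) (M₂ := M₂)) (gM (M₁ := M₁) (M₂ := M₂))

@[simp] lemma B2_tmul (u v p q : TensorProduct ℝ M₁ M₂) :
    B2 (u ⊗ₜ[ℝ] v) (p ⊗ₜ[ℝ] q) = gM u p * gM v q := by
  simp [B2, mul_comm]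

/-- The basic invariant 4-linear map. -/
noncomputable def F : MultilinearMap ℝ (fun _ : Fin 4 => TensorProduct ℝ M₁ M₂) ℝ where
  toFun w := B2 (w 0 ⊗ₜ[ℝ] w 1) (sw (w 2 ⊗ₜ[ℝ] w 3))
  map_update_add' m i x y := by
    have h : ‹DecidableEq (Fin 4)› = instDecidableEqFin 4 := Subsingleton.elim _ _
    subst h
    fin_cases i <;>
      simp [Function.update_self, Function.update_of_ne, TensorProduct.add_tmul,
        TensorProduct.tmul_add, map_add, LinearMap.add_apply]
  map_update_smul' m i c x := by
    have h : ‹DecidableEq (Fin 4)› = instDecidableEqFin 4 := Subsingleton.elim _ _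
    subst h
    fin_cases i <;>
      simp [Function.update_self, Function.update_of_ne, ← TensorProduct.smul_tmul',
        TensorProduct.tmul_smul, map_smul, LinearMap.smul_apply]

@[simp] lemma F_apply (w : Fin 4 → TensorProduct ℝ M₁ M₂) :
    F w = B2 (w 0 ⊗ₜ[ℝ] w 1) (sw (w 2 ⊗ₜ[ℝ] w 3)) := rfl


lemma gM_skew_rT (D : M₁ →ₗ[ℝ] M₁) (hD : ∀ u v : M₁, ⟪D u, v⟫ + ⟪u, D v⟫ = 0)
    (u v : TensorProduct ℝ M₁ M₂) :
    gM (LinearMap.rTensor M₂ D u) v + gM u (LinearMap.rTensor M₂ D v) = 0 := by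
  induction u using TensorProduct.induction_on with
  | zero => simp
  | tmul x y =>
    induction v using TensorProduct.induction_on with
    | zero => simp
    | tmul x' y' =>
      simp only [LinearMap.rTensor_tmul, gM_tmul]
      linear_combination ⟪y, y'⟫ * hD x x'
    | add v1 v2 ih1 ih2 =>
      simp only [map_add, LinearMap.add_apply] at *
      linarith
  | add u1 u2 ih1 ih2 =>
    simp only [map_add, LinearMap.add_apply] at *
    linarith

lemma gM_skew_lT (D : M₂ →ₗ[ℝ] M₂) (hD : ∀ u v : M₂, ⟪D u, v⟫ + ⟪u, D v⟫ = 0)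
    (u v : TensorProduct ℝ M₁ M₂) :
    gM (LinearMap.lTensor M₁ D u) v + gM u (LinearMap.lTensor M₁ D v) = 0 := by
  induction u using TensorProduct.induction_on with
  | zero => simp
  | tmul x y =>
    induction v using TensorProduct.induction_on with
    | zero => simp
    | tmul x' y' =>
      simp only [LinearMap.lTensor_tmul, gM_tmul]
      linear_combination ⟪x, x'⟫ * hD y y'
    | add v1 v2 ih1 ih2 =>
      simp only [map_add, LinearMap.add_apply] at *
      linarith
  | add u1 u2 ih1 ih2 =>
    simp only [map_add, LinearMap.add_apply] at *
    linarith

lemma B2_skew (D : TensorProduct ℝ M₁ M₂ →ₗ[ℝ] TensorProduct ℝ M₁ M₂)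
    (hD : ∀ u v, gM (D u) v + gM u (D v) = 0)
    (p q : TensorProduct ℝ (TensorProduct ℝ M₁ M₂) (TensorProduct ℝ M₁ M₂)) :
    B2 (TensorProduct.map D LinearMap.id p) q + B2 (TensorProduct.map LinearMap.id D p) q
      + B2 p (TensorProduct.map D LinearMap.id q) + B2 p (TensorProduct.map LinearMap.id D q)
      = 0 := by
  induction p using TensorProduct.induction_on with
  | zero => simp
  | tmul a b =>
    induction q using TensorProduct.induction_on with
    | zero => simp
    | tmul c d =>
      simp only [TensorProduct.map_tmul, LinearMap.id_coe, id_eq, B2_tmul]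
      linear_combination gM b d * hD a c + gM a c * hD b d
    | add q1 q2 ih1 ih2 =>
      simp only [map_add, LinearMap.add_apply] at *
      linarith
  | add p1 p2 ih1 ih2 =>
    simp only [map_add, LinearMap.add_apply] at *
    linarith

lemma sw_comm_rT_left (D : M₁ →ₗ[ℝ] M₁) :
    (sw (M₁ := M₁) (M₂ := M₂)) ∘ₗ TensorProduct.map (LinearMap.rTensor M₂ D) LinearMap.id
      = TensorProduct.map (LinearMap.rTensor M₂ D) LinearMap.id ∘ₗ sw := by
  apply TensorProduct.ext_fourfold'
  intro x y x' y'
  simp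

lemma sw_comm_rT_right (D : M₁ →ₗ[ℝ] M₁) :
    (sw (M₁ := M₁) (M₂ := M₂)) ∘ₗ TensorProduct.map LinearMap.id (LinearMap.rTensor M₂ D)
      = TensorProduct.map LinearMap.id (LinearMap.rTensor M₂ D) ∘ₗ sw := by
  apply TensorProduct.ext_fourfold'
  intro x y x' y'
  simp

lemma sw_comm_lT_left (D : M₂ →ₗ[ℝ] M₂) :
    (sw (M₁ := M₁) (M₂ := M₂)) ∘ₗ TensorProduct.map (LinearMap.lTensor M₁ D) LinearMap.id
      = TensorProduct.map LinearMap.id (LinearMap.lTensor M₁ D) ∘ₗ sw := by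
  apply TensorProduct.ext_fourfold'
  intro x y x' y'
  simp

lemma sw_comm_lT_right (D : M₂ →ₗ[ℝ] M₂) :
    (sw (M₁ := M₁) (M₂ := M₂)) ∘ₗ TensorProduct.map LinearMap.id (LinearMap.lTensor M₁ D)
      = TensorProduct.map (LinearMap.lTensor M₁ D) LinearMap.id ∘ₗ sw := by
  apply TensorProduct.ext_fourfold'
  intro x y x' y'
  simp


lemma F_sum_zero (D : TensorProduct ℝ M₁ M₂ →ₗ[ℝ] TensorProduct ℝ M₁ M₂)
    (hsk : ∀ u v, gM (D u) v + gM u (D v) = 0)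
    (hc : ∀ p, sw (TensorProduct.map D LinearMap.id p) + sw (TensorProduct.map LinearMap.id D p)
      = TensorProduct.map D LinearMap.id (sw p) + TensorProduct.map LinearMap.id D (sw p))
    (w : Fin 4 → TensorProduct ℝ M₁ M₂) :
    ∑ i : Fin 4, F (Function.update w i (D (w i))) = 0 := by
  rw [Fin.sum_univ_four]
  simp only [F_apply, Function.update_self, Function.update_of_ne (by decide : (1:Fin 4) ≠ 0),
    Function.update_of_ne (by decide : (2:Fin 4) ≠ 0), Function.update_of_ne (by decide : (3:Fin 4) ≠ 0),
    Function.update_of_ne (by decide : (0:Fin 4) ≠ 1), Function.update_of_ne (by decide : (2:Fin 4) ≠ 1),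
    Function.update_of_ne (by decide : (3:Fin 4) ≠ 1), Function.update_of_ne (by decide : (0:Fin 4) ≠ 2),
    Function.update_of_ne (by decide : (1:Fin 4) ≠ 2), Function.update_of_ne (by decide : (3:Fin 4) ≠ 2),
    Function.update_of_ne (by decide : (0:Fin 4) ≠ 3), Function.update_of_ne (by decide : (1:Fin 4) ≠ 3),
    Function.update_of_ne (by decide : (2:Fin 4) ≠ 3)]
  have hq := congrArg (B2 (w 0 ⊗ₜ[ℝ] w 1)) (hc (w 2 ⊗ₜ[ℝ] w 3))
  have hsk2 := B2_skew D hsk (w 0 ⊗ₜ[ℝ] w 1) (sw (w 2 ⊗ₜ[ℝ] w 3))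
  simp only [TensorProduct.map_tmul, LinearMap.id_coe, id_eq, map_add] at hq hsk2
  linarith [hq, hsk2]

/-- The invariant alternating 4-form. -/
noncomputable def Om : AlternatingMap ℝ (TensorProduct ℝ M₁ M₂) ℝ (Fin 4) :=
  MultilinearMap.alternatization F

lemma Om_sum (D : TensorProduct ℝ M₁ M₂ →ₗ[ℝ] TensorProduct ℝ M₁ M₂)
    (hF : ∀ w : Fin 4 → TensorProduct ℝ M₁ M₂,
      ∑ i : Fin 4, F (Function.update w i (D (w i))) = 0)
    (v : Fin 4 → TensorProduct ℝ M₁ M₂) :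
    ∑ i : Fin 4, Om (Function.update v i (D (v i))) = 0 := by
  simp only [Om, MultilinearMap.alternatization_apply]
  rw [Finset.sum_comm]
  refine Finset.sum_eq_zero fun σ _ => ?_
  have key : ∀ i : Fin 4, (F.domDomCongr σ) (Function.update v i (D (v i)))
      = F (Function.update (v ∘ σ) (σ.symm i) (D ((v ∘ σ) (σ.symm i)))) := by
    intro i
    rw [MultilinearMap.domDomCongr_apply]
    have h2 : (Function.update v i (D (v i))) ∘ σ
        = Function.update (v ∘ σ) (σ.symm i) (D (v i)) := Function.update_comp_equiv v σ i (D (v i))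
    calc F (fun j => Function.update v i (D (v i)) (σ j))
        = F ((Function.update v i (D (v i))) ∘ σ) := rfl
      _ = F (Function.update (v ∘ σ) (σ.symm i) (D (v i))) := by rw [h2]
      _ = _ := by rw [Function.comp_apply, Equiv.apply_symm_apply]
  simp only [key]
  rw [← Finset.smul_sum]
  have h0 : (∑ i : Fin 4, F (Function.update (v ∘ σ) (σ.symm i) (D ((v ∘ σ) (σ.symm i))))) = 0 :=
    (Equiv.sum_comp σ.symm fun j => F (Function.update (v ∘ σ) j (D ((v ∘ σ) j)))).trans (hF (v ∘ σ))
  rw [h0, smul_zero]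

lemma upd0 {α : Type*} (u v w z x : α) : Function.update ![u,v,w,z] (0 : Fin 4) x = ![x,v,w,z] := by
  funext j; fin_cases j <;> simp [Function.update_self, Function.update_of_ne]

lemma upd1 {α : Type*} (u v w z x : α) : Function.update ![u,v,w,z] (1 : Fin 4) x = ![u,x,w,z] := by
  funext j; fin_cases j <;> simp [Function.update_self, Function.update_of_ne]

lemma upd2 {α : Type*} (u v w z x : α) : Function.update ![u,v,w,z] (2 : Fin 4) x = ![u,v,x,z] := by
  funext j; fin_cases j <;> simp [Function.update_self, Function.update_of_ne]

lemma upd3 {α : Type*} (u v w z x : α) : Function.update ![u,v,w,z] (3 : Fin 4) x = ![u,v,w,x] := by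
  funext j; fin_cases j <;> simp [Function.update_self, Function.update_of_ne]

set_option maxRecDepth 10000 in
lemma Om_sum4 (D : TensorProduct ℝ M₁ M₂ →ₗ[ℝ] TensorProduct ℝ M₁ M₂)
    (hF : ∀ w : Fin 4 → TensorProduct ℝ M₁ M₂,
      ∑ i : Fin 4, F (Function.update w i (D (w i))) = 0)
    (u v w z : TensorProduct ℝ M₁ M₂) :
    Om ![D u, v, w, z] + Om ![u, D v, w, z] + Om ![u, v, D w, z] + Om ![u, v, w, D z] = 0 := by
  have h := Om_sum D hF ![u,v,w,z]
  rw [Fin.sum_univ_four] at h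
  simp only [Matrix.cons_val_zero, Matrix.cons_val_one, Matrix.head_cons, Matrix.cons_val_two,
    Matrix.tail_cons, Matrix.cons_val_three, upd0, upd1, upd2, upd3] at h
  exact h


set_option maxRecDepth 10000 in
lemma Om_value (e : Fin 2 → M₁) (f : Fin 2 → M₂) (he : Orthonormal ℝ e) (hf : Orthonormal ℝ f) :
    Om (fun k : Fin 4 => e ((![0,0,1,1] : Fin 4 → Fin 2) k) ⊗ₜ[ℝ] f ((![0,1,0,1] : Fin 4 → Fin 2) k))
      = ((4 : ℤ) : ℝ) := by
  classical
  have hee := orthonormal_iff_ite.mp he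
  have hff := orthonormal_iff_ite.mp hf
  set ix : Fin 4 → Fin 2 := ![0,0,1,1] with hix
  set iy : Fin 4 → Fin 2 := ![0,1,0,1] with hiy
  set N : Equiv.Perm (Fin 4) → ℤ := fun σ =>
    ((if ix (σ 0) = ix (σ 2) then 1 else 0) * (if iy (σ 0) = iy (σ 3) then 1 else 0))
      * ((if ix (σ 1) = ix (σ 3) then 1 else 0) * (if iy (σ 1) = iy (σ 2) then 1 else 0)) with hN
  have hterm : ∀ σ : Equiv.Perm (Fin 4),
      (F.domDomCongr σ) (fun k => e (ix k) ⊗ₜ[ℝ] f (iy k)) = ((N σ : ℤ) : ℝ) := by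
    intro σ
    rw [MultilinearMap.domDomCongr_apply]
    show F (fun j => e (ix (σ j)) ⊗ₜ[ℝ] f (iy (σ j))) = ((N σ : ℤ) : ℝ)
    rw [F_apply]
    simp only [sw_tmul, B2_tmul, gM_tmul, hee, hff, hN]
    push_cast
    ring
  rw [Om, MultilinearMap.alternatization_apply]
  calc (∑ σ : Equiv.Perm (Fin 4), Equiv.Perm.sign σ •
        (F.domDomCongr σ) (fun k => e (ix k) ⊗ₜ[ℝ] f (iy k)))
      = ∑ σ : Equiv.Perm (Fin 4), (((Equiv.Perm.sign σ : ℤ) * N σ : ℤ) : ℝ) := by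
        refine Finset.sum_congr rfl fun σ _ => ?_
        rw [hterm σ, Units.smul_def, zsmul_eq_mul]
        push_cast
        ring
    _ = (((∑ σ : Equiv.Perm (Fin 4), (Equiv.Perm.sign σ : ℤ) * N σ) : ℤ) : ℝ) := by
        rw [Int.cast_sum]
    _ = ((4 : ℤ) : ℝ) := by
        have h4 : (∑ σ : Equiv.Perm (Fin 4), (Equiv.Perm.sign σ : ℤ) * N σ) = 4 := by
          rw [hN, hix, hiy]; decide
        rw [h4]


lemma two_le_finrank_of_skew {E : Type*} [NormedAddCommGroup E] [InnerProductSpace ℝ E]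
    [FiniteDimensional ℝ E] (D : E →ₗ[ℝ] E) (hD : ∀ u v : E, ⟪D u, v⟫ + ⟪u, D v⟫ = 0)
    (v : E) (hv : D v ≠ 0) : 2 ≤ Module.finrank ℝ E := by
  by_contra hlt
  push_neg at hlt
  have h1 : Module.finrank ℝ E ≤ 1 := by omega
  obtain ⟨w, hw⟩ := finrank_le_one_iff.mp h1
  obtain ⟨a, ha⟩ := hw v
  obtain ⟨b, hb⟩ := hw (D v)
  have hv0 : v ≠ 0 := fun h => hv (by rw [h, map_zero])
  have h0 : ⟪D v, v⟫ = 0 := by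
    have h := hD v v
    have h2 := real_inner_comm v (D v)
    linarith
  rw [← hb, ← ha] at h0
  rw [← hb] at hv
  have hb0 : b ≠ 0 := fun h => hv (by rw [h, zero_smul])
  have hw0 : w ≠ 0 := fun h => hv (by rw [h, smul_zero])
  have ha0 : a ≠ 0 := by
    intro h
    rw [h, zero_smul] at ha
    exact hv0 ha.symm
  rw [real_inner_smul_left, real_inner_smul_right] at h0
  have hww : ⟪w, w⟫ ≠ 0 := fun h => hw0 (inner_self_eq_zero.mp h)
  exact (mul_ne_zero hb0 (mul_ne_zero ha0 hww)) h0

end InvFourForm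



set_option maxRecDepth 100000
set_option maxHeartbeats 2000000

open InvFourForm


/-- If `m = m₁ ⊗ m₂` is an irreducible real representation of the
direct sum `h = h₁ ⊕ h₂` with both ideals acting nontrivially (by skew-symmetric
endomorphisms), and `dim m ≥ 4`, then `(Λ⁴m)^h ≠ 0`: there is a nonzero
`h`-invariant alternating 4-form on `m`. -/
theorem invariant_four_form_exists_of_tensor_product
    {H₁ H₂ M₁ M₂ : Type*}
    [LieRing H₁] [LieAlgebra ℝ H₁] [LieRing H₂] [LieAlgebra ℝ H₂]
    [NormedAddCommGroup M₁] [InnerProductSpace ℝ M₁] [FiniteDimensional ℝ M₁]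
    [NormedAddCommGroup M₂] [InnerProductSpace ℝ M₂] [FiniteDimensional ℝ M₂]
    (ρ₁ : H₁ →ₗ[ℝ] M₁ →ₗ[ℝ] M₁) (ρ₂ : H₂ →ₗ[ℝ] M₂ →ₗ[ℝ] M₂)
    (hLie₁ : ∀ (a b : H₁) (v : M₁), ρ₁ ⁅a, b⁆ v = ρ₁ a (ρ₁ b v) - ρ₁ b (ρ₁ a v))
    (hLie₂ : ∀ (a b : H₂) (v : M₂), ρ₂ ⁅a, b⁆ v = ρ₂ a (ρ₂ b v) - ρ₂ b (ρ₂ a v))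
    (hskew₁ : ∀ (a : H₁) (u v : M₁), ⟪ρ₁ a u, v⟫ + ⟪u, ρ₁ a v⟫ = 0)
    (hskew₂ : ∀ (a : H₂) (u v : M₂), ⟪ρ₂ a u, v⟫ + ⟪u, ρ₂ a v⟫ = 0)
    (hnt₁ : ∃ (a : H₁) (v : M₁), ρ₁ a v ≠ 0)
    (hnt₂ : ∃ (a : H₂) (v : M₂), ρ₂ a v ≠ 0)
    (hdim : 4 ≤ Module.finrank ℝ (TensorProduct ℝ M₁ M₂))
    (hirr : ∀ p : Submodule ℝ (TensorProduct ℝ M₁ M₂),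
      (∀ (a : H₁), ∀ x ∈ p, LinearMap.rTensor M₂ (ρ₁ a) x ∈ p) →
      (∀ (b : H₂), ∀ x ∈ p, LinearMap.lTensor M₁ (ρ₂ b) x ∈ p) →
      p = ⊥ ∨ p = ⊤) :
    ∃ Ω : AlternatingMap ℝ (TensorProduct ℝ M₁ M₂) ℝ (Fin 4), Ω ≠ 0 ∧
      (∀ (a : H₁) (u v w z : TensorProduct ℝ M₁ M₂),
        Ω ![LinearMap.rTensor M₂ (ρ₁ a) u, v, w, z]
          + Ω ![u, LinearMap.rTensor M₂ (ρ₁ a) v, w, z]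
          + Ω ![u, v, LinearMap.rTensor M₂ (ρ₁ a) w, z]
          + Ω ![u, v, w, LinearMap.rTensor M₂ (ρ₁ a) z] = 0) ∧
      (∀ (b : H₂) (u v w z : TensorProduct ℝ M₁ M₂),
        Ω ![LinearMap.lTensor M₁ (ρ₂ b) u, v, w, z]
          + Ω ![u, LinearMap.lTensor M₁ (ρ₂ b) v, w, z]
          + Ω ![u, v, LinearMap.lTensor M₁ (ρ₂ b) w, z]
          + Ω ![u, v, w, LinearMap.lTensor M₁ (ρ₂ b) z] = 0) := by
  obtain ⟨a₁, v₁, hv₁⟩ := hnt₁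
  obtain ⟨a₂, v₂, hv₂⟩ := hnt₂
  have h2₁ : 2 ≤ Module.finrank ℝ M₁ :=
    two_le_finrank_of_skew (ρ₁ a₁) (hskew₁ a₁) v₁ hv₁
  have h2₂ : 2 ≤ Module.finrank ℝ M₂ :=
    two_le_finrank_of_skew (ρ₂ a₂) (hskew₂ a₂) v₂ hv₂
  set e : Fin 2 → M₁ := (stdOrthonormalBasis ℝ M₁) ∘ Fin.castLE h2₁ with hedef
  set f : Fin 2 → M₂ := (stdOrthonormalBasis ℝ M₂) ∘ Fin.castLE h2₂ with hfdef
  have he : Orthonormal ℝ e :=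
    (stdOrthonormalBasis ℝ M₁).orthonormal.comp _ (Fin.castLE_injective h2₁)
  have hf : Orthonormal ℝ f :=
    (stdOrthonormalBasis ℝ M₂).orthonormal.comp _ (Fin.castLE_injective h2₂)
  refine ⟨Om, ?_, ?_, ?_⟩
  · intro h
    have hval := Om_value e f he hf
    rw [h] at hval
    simp only [AlternatingMap.zero_apply] at hval
    norm_num at hval
  · intro a u v w z
    refine Om_sum4 (LinearMap.rTensor M₂ (ρ₁ a)) ?_ u v w z
    intro w'
    refine F_sum_zero _ (gM_skew_rT (ρ₁ a) (hskew₁ a)) ?_ w'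
    intro p
    have h1 := LinearMap.congr_fun (sw_comm_rT_left (M₂ := M₂) (ρ₁ a)) p
    have h2 := LinearMap.congr_fun (sw_comm_rT_right (M₂ := M₂) (ρ₁ a)) p
    simp only [LinearMap.comp_apply] at h1 h2
    rw [h1, h2]
  · intro b u v w z
    refine Om_sum4 (LinearMap.lTensor M₁ (ρ₂ b)) ?_ u v w z
    intro w'
    refine F_sum_zero _ (gM_skew_lT (ρ₂ b) (hskew₂ b)) ?_ w'
    intro p
    have h1 := LinearMap.congr_fun (sw_comm_lT_left (M₁ := M₁) (ρ₂ b)) p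
    have h2 := LinearMap.congr_fun (sw_comm_lT_right (M₁ := M₁) (ρ₂ b)) p
    simp only [LinearMap.comp_apply] at h1 h2
    rw [h1, h2, add_comm]
end

section
/- For 2n-dimensional m with quaternionic structure (I,J,K), the double contraction λ_I² with respect to ω_I satisfies λ_I²(ω_I∧ω_I) = 2n(n-1) and λ_I²(ω_J∧ω_J) = λ_I²(ω_K∧ω_K) = 2n. -/
open scoped RealInnerProductSpace BigOperators

/-- On a `2n`-dimensional Euclidean space with quaternionic
structure `(I,J,K = IJ)` and Kähler forms `ω_A(u,v) = ⟨Au,v⟩`, the double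
contraction `λ_I²` with respect to `ω_I` (where
`λ_I(τ) = (1/2) ∑ᵢ (Ieᵢ) ⌟ (eᵢ ⌟ τ)`) satisfies `λ_I²(ω_I∧ω_I) = 2n(n-1)` and
`λ_I²(ω_J∧ω_J) = λ_I²(ω_K∧ω_K) = 2n`. -/
theorem double_contraction_quaternionic
    {M : Type*} [NormedAddCommGroup M] [InnerProductSpace ℝ M]
    (n : ℕ) (b : OrthonormalBasis (Fin (2 * n)) ℝ M)
    (I J K : M →ₗ[ℝ] M)
    (hI2 : ∀ v : M, I (I v) = -v) (hJ2 : ∀ v : M, J (J v) = -v)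
    (hIJ : ∀ v : M, I (J v) = - J (I v))
    (hK : ∀ v : M, K v = I (J v))
    (hIorth : ∀ u v : M, ⟪I u, I v⟫ = ⟪u, v⟫)
    (hJorth : ∀ u v : M, ⟪J u, J v⟫ = ⟪u, v⟫)
    (ωI ωJ ωK : M → M → ℝ)
    (hωI : ∀ u v, ωI u v = ⟪I u, v⟫)
    (hωJ : ∀ u v, ωJ u v = ⟪J u, v⟫)
    (hωK : ∀ u v, ωK u v = ⟪K u, v⟫) :
    (1 / 4 : ℝ) * ∑ i, ∑ j, wedge2 ωI ωI (b i) (I (b i)) (b j) (I (b j))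
        = 2 * (n : ℝ) * ((n : ℝ) - 1) ∧
    (1 / 4 : ℝ) * ∑ i, ∑ j, wedge2 ωJ ωJ (b i) (I (b i)) (b j) (I (b j))
        = 2 * (n : ℝ) ∧
    (1 / 4 : ℝ) * ∑ i, ∑ j, wedge2 ωK ωK (b i) (I (b i)) (b j) (I (b j))
        = 2 * (n : ℝ) := by
  have hIskew : ∀ u v : M, ⟪I u, v⟫ = -⟪u, I v⟫ := by
    intro u v
    rw [← hIorth (I u) v, hI2, inner_neg_left]
  have hJskew : ∀ u v : M, ⟪J u, v⟫ = -⟪u, J v⟫ := by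
    intro u v
    rw [← hJorth (J u) v, hJ2, inner_neg_left]
  have hJI : ∀ v : M, J (I v) = - I (J v) := by
    intro v; rw [hIJ v, neg_neg]
  have hbi : ∀ i, ⟪b i, b i⟫ = 1 := by
    intro i
    rw [real_inner_self_eq_norm_mul_norm, b.orthonormal.1 i, one_mul]
  -- diagonal vanishing
  have hdiagJ : ∀ v : M, ⟪J v, v⟫ = 0 := by
    intro v
    have h1 : ⟪J v, v⟫ = -⟪v, J v⟫ := hJskew v v
    have h2 : ⟪v, J v⟫ = ⟪J v, v⟫ := real_inner_comm _ _
    rw [h2] at h1; linarith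
  have hdiagJI : ∀ v : M, ⟪J v, I v⟫ = 0 := by
    intro v
    have h1 : ⟪J v, I v⟫ = -⟪v, J (I v)⟫ := hJskew v (I v)
    rw [hJI v, inner_neg_right, neg_neg] at h1
    have h2 : ⟪v, I (J v)⟫ = -⟪I v, J v⟫ := by
      have := hIskew v (J v); linarith
    have h3 : ⟪I v, J v⟫ = ⟪J v, I v⟫ := real_inner_comm _ _
    rw [h2, h3] at h1
    linarith
  -- Parseval-type sums
  have key : ∀ x : M, ∑ j, ⟪x, b j⟫ * ⟪x, b j⟫ = ⟪x, x⟫ := by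
    intro x
    have h := b.sum_inner_mul_inner x x
    simpa [real_inner_comm] using h
  have keyI : ∀ x : M, ∑ j, ⟪x, I (b j)⟫ * ⟪x, I (b j)⟫ = ⟪x, x⟫ := by
    intro x
    have h : ∀ j, ⟪x, I (b j)⟫ = -⟪I x, b j⟫ := by
      intro j; rw [hIskew, neg_neg]
    calc ∑ j, ⟪x, I (b j)⟫ * ⟪x, I (b j)⟫
        = ∑ j, ⟪I x, b j⟫ * ⟪I x, b j⟫ := by
          refine Finset.sum_congr rfl fun j _ => ?_
          rw [h j]; ring
      _ = ⟪I x, I x⟫ := key (I x)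
      _ = ⟪x, x⟫ := hIorth x x
  have hcard : (Finset.univ : Finset (Fin (2 * n))).card = 2 * n := by simp
  -- first sum
  have c1 : ∑ i, ∑ j, wedge2 ωI ωI (b i) (I (b i)) (b j) (I (b j))
      = 8 * (n : ℝ) * (n : ℝ) - 8 * (n : ℝ) := by
    have hterm : ∀ i j, wedge2 ωI ωI (b i) (I (b i)) (b j) (I (b j))
        = 2 * (1 - ⟪I (b i), b j⟫ * ⟪I (b i), b j⟫ - ⟪b i, b j⟫ * ⟪b i, b j⟫) := by
      intro i j
      have e1 : ωI (b i) (I (b i)) = 1 := by rw [hωI, hIorth, hbi]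
      have e2 : ωI (b j) (I (b j)) = 1 := by rw [hωI, hIorth, hbi]
      have e3 : ωI (b i) (b j) = ⟪I (b i), b j⟫ := hωI _ _
      have e4 : ωI (I (b i)) (I (b j)) = ⟪I (b i), b j⟫ := by
        rw [hωI, hI2, inner_neg_left, hIskew]
      have e5 : ωI (b i) (I (b j)) = ⟪b i, b j⟫ := by rw [hωI, hIorth]
      have e6 : ωI (I (b i)) (b j) = -⟪b i, b j⟫ := by
        rw [hωI, hI2, inner_neg_left]
      rw [wedge2, e1, e2, e3, e4, e5, e6]; ring
    calc ∑ i, ∑ j, wedge2 ωI ωI (b i) (I (b i)) (b j) (I (b j))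
        = ∑ i, ∑ j, 2 * (1 - ⟪I (b i), b j⟫ * ⟪I (b i), b j⟫
            - ⟪b i, b j⟫ * ⟪b i, b j⟫) := by
          exact Finset.sum_congr rfl fun i _ =>
            Finset.sum_congr rfl fun j _ => hterm i j
      _ = ∑ i : Fin (2 * n), (2 * (2 * (n : ℝ)) - 2 * 1 - 2 * 1) := by
          refine Finset.sum_congr rfl fun i _ => ?_
          have h1 : ∑ j, ⟪I (b i), b j⟫ * ⟪I (b i), b j⟫ = 1 := by
            rw [key (I (b i)), hIorth, hbi]
          have h2 : ∑ j, ⟪b i, b j⟫ * ⟪b i, b j⟫ = 1 := by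
            rw [key (b i), hbi]
          have : ∑ j, 2 * (1 - ⟪I (b i), b j⟫ * ⟪I (b i), b j⟫
              - ⟪b i, b j⟫ * ⟪b i, b j⟫)
              = 2 * ((∑ _j : Fin (2 * n), (1 : ℝ))
                - (∑ j, ⟪I (b i), b j⟫ * ⟪I (b i), b j⟫)
                - (∑ j, ⟪b i, b j⟫ * ⟪b i, b j⟫)) := by
            rw [← Finset.sum_sub_distrib, ← Finset.sum_sub_distrib, Finset.mul_sum]
          rw [this, h1, h2, Finset.sum_const, hcard]
          push_cast; ring
      _ = 8 * (n : ℝ) * (n : ℝ) - 8 * (n : ℝ) := by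
          rw [Finset.sum_const, hcard]; push_cast; ring
  -- common computation for J and K forms
  have cJK : ∀ ω : M → M → ℝ, (∀ i j : Fin (2 * n),
      wedge2 ω ω (b i) (I (b i)) (b j) (I (b j))
        = 2 * (⟪J (b i), b j⟫ * ⟪J (b i), b j⟫ + ⟪J (b i), I (b j)⟫ * ⟪J (b i), I (b j)⟫)) →
      ∑ i, ∑ j, wedge2 ω ω (b i) (I (b i)) (b j) (I (b j)) = 8 * (n : ℝ) := by
    intro ω hterm
    calc ∑ i, ∑ j, wedge2 ω ω (b i) (I (b i)) (b j) (I (b j))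
        = ∑ i, ∑ j, 2 * (⟪J (b i), b j⟫ * ⟪J (b i), b j⟫
            + ⟪J (b i), I (b j)⟫ * ⟪J (b i), I (b j)⟫) := by
          exact Finset.sum_congr rfl fun i _ =>
            Finset.sum_congr rfl fun j _ => hterm i j
      _ = ∑ i : Fin (2 * n), (4 : ℝ) := by
          refine Finset.sum_congr rfl fun i _ => ?_
          have h1 : ∑ j, ⟪J (b i), b j⟫ * ⟪J (b i), b j⟫ = 1 := by
            rw [key (J (b i)), hJorth, hbi]
          have h2 : ∑ j, ⟪J (b i), I (b j)⟫ * ⟪J (b i), I (b j)⟫ = 1 := by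
            rw [keyI (J (b i)), hJorth, hbi]
          have : ∑ j, 2 * (⟪J (b i), b j⟫ * ⟪J (b i), b j⟫
              + ⟪J (b i), I (b j)⟫ * ⟪J (b i), I (b j)⟫)
              = 2 * ((∑ j, ⟪J (b i), b j⟫ * ⟪J (b i), b j⟫)
                + (∑ j, ⟪J (b i), I (b j)⟫ * ⟪J (b i), I (b j)⟫)) := by
            rw [← Finset.sum_add_distrib, Finset.mul_sum]
          rw [this, h1, h2]; norm_num
      _ = 8 * (n : ℝ) := by rw [Finset.sum_const, hcard]; push_cast; ring
  have c2 : ∑ i, ∑ j, wedge2 ωJ ωJ (b i) (I (b i)) (b j) (I (b j)) = 8 * (n : ℝ) := by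
    apply cJK
    intro i j
    have e1 : ωJ (b i) (I (b i)) = 0 := by rw [hωJ, hdiagJI]
    have e2 : ωJ (b j) (I (b j)) = 0 := by rw [hωJ, hdiagJI]
    have e3 : ωJ (b i) (b j) = ⟪J (b i), b j⟫ := hωJ _ _
    have e4 : ωJ (I (b i)) (I (b j)) = -⟪J (b i), b j⟫ := by
      rw [hωJ, hJI, inner_neg_left, hIorth]
    have e5 : ωJ (b i) (I (b j)) = ⟪J (b i), I (b j)⟫ := hωJ _ _
    have e6 : ωJ (I (b i)) (b j) = ⟪J (b i), I (b j)⟫ := by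
      rw [hωJ, hJI, inner_neg_left, hIskew, neg_neg]
    rw [wedge2, e1, e2, e3, e4, e5, e6]; ring
  have c3 : ∑ i, ∑ j, wedge2 ωK ωK (b i) (I (b i)) (b j) (I (b j)) = 8 * (n : ℝ) := by
    apply cJK
    intro i j
    have e1 : ωK (b i) (I (b i)) = 0 := by
      rw [hωK, hK, hIorth, hdiagJ]
    have e2 : ωK (b j) (I (b j)) = 0 := by
      rw [hωK, hK, hIorth, hdiagJ]
    have e3 : ωK (b i) (b j) = -⟪J (b i), I (b j)⟫ := by
      rw [hωK, hK, hIskew]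
    have e4 : ωK (I (b i)) (I (b j)) = ⟪J (b i), I (b j)⟫ := by
      rw [hωK, hK, hIorth, hJI, inner_neg_left, hIskew, neg_neg]
    have e5 : ωK (b i) (I (b j)) = ⟪J (b i), b j⟫ := by
      rw [hωK, hK, hIorth]
    have e6 : ωK (I (b i)) (b j) = ⟪J (b i), b j⟫ := by
      have : I (J (I (b i))) = J (b i) := by
        rw [hJI, map_neg, hI2, neg_neg]
      rw [hωK, hK, this]
    rw [wedge2, e1, e2, e3, e4, e5, e6]; ring
  refine ⟨?_, ?_, ?_⟩
  · rw [c1]; ring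
  · rw [c2]; ring
  · rw [c3]; ring
end

section
/- For n = 8k-1 with k ≥ 1, the quantity 2⟨α,β⟩/⟨β,β⟩ with α = e_1 and β = (1/2)Σ_{i=1}^{4k-1} e_i in ℝ^{4k-1} equals 2/(4k-1), which is never an integer; hence the spin representation Σ_{8k-1} of spin(8k-1) is never of Lie type. -/
open scoped RealInnerProductSpace BigOperators

namespace EuclideanSpace

variable {ι : Type*} [Fintype ι] [DecidableEq ι]

theorem inner_single_sum_single (i : ι) :
    ⟪single i (1 : ℝ), ∑ j, single j (1 : ℝ)⟫ = 1 := by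
  simp only [inner_sum, inner_single_right, PiLp.single_apply]
  simp

theorem inner_sum_single_sum_single :
    ⟪∑ i : ι, single i (1 : ℝ), ∑ j : ι, single j (1 : ℝ)⟫ = Fintype.card ι := by
  rw [sum_inner]
  simp only [inner_single_sum_single, Finset.sum_const, Finset.card_univ, nsmul_eq_mul, mul_one]

end EuclideanSpace

theorem Odd.not_exists_int_mul_eq_four {n : ℕ} (hodd : Odd n) (hn : n ≠ 1) :
    ¬ ∃ q : ℤ, (4 : ℝ) = q * n := by
  rintro ⟨q, hq⟩
  have hdvd : (n : ℤ) ∣ (4 : ℕ) := ⟨q, by rw [mul_comm]; exact_mod_cast hq⟩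
  have hcop : Nat.Coprime n 4 :=
    Nat.Coprime.pow_right 2 (Nat.coprime_two_right.mpr hodd)
  exact hn (hcop.eq_one_of_dvd (Int.natCast_dvd_natCast.mp hdvd))

/-- For `n = 8k-1` (`k ≥ 1`), with `α = e₁` a root of
`spin(8k-1)` and `β = (1/2)∑_{i=1}^{4k-1} eᵢ` a weight of the spin
representation `Σ_{8k-1}` in `ℝ^{4k-1}`, one has `⟨α,β⟩ = 1/2` and
`⟨β,β⟩ = (4k-1)/4`, and the quotient `2⟨α,β⟩/⟨β,β⟩` is never an integer;
hence (the integrality test for root systems of compact Lie algebras fails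
and) `Σ_{8k-1}` is never of Lie type. -/
theorem spin_8k_minus_1_not_lie_type
    (k : ℕ) (hk : 1 ≤ k)
    (α β : EuclideanSpace ℝ (Fin (4 * k - 1)))
    (hα : α = EuclideanSpace.single ⟨0, by omega⟩ (1 : ℝ))
    (hβ : β = (1 / 2 : ℝ) • ∑ i, EuclideanSpace.single i (1 : ℝ)) :
    ⟪α, β⟫ = 1 / 2 ∧
    ⟪β, β⟫ = ((4 * k - 1 : ℕ) : ℝ) / 4 ∧
    ¬ ∃ q : ℤ, 2 * ⟪α, β⟫ = (q : ℝ) * ⟪β, β⟫ := by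
  have hαβ : ⟪α, β⟫ = 1 / 2 := by
    rw [hα, hβ, real_inner_smul_right, EuclideanSpace.inner_single_sum_single, mul_one]
  have hββ : ⟪β, β⟫ = ((4 * k - 1 : ℕ) : ℝ) / 4 := by
    rw [hβ, real_inner_smul_left, real_inner_smul_right,
      EuclideanSpace.inner_sum_single_sum_single, Fintype.card_fin]
    ring
  refine ⟨hαβ, hββ, ?_⟩
  rintro ⟨q, hq⟩
  have hodd : Odd (4 * k - 1) := ⟨2 * k - 1, by omega⟩
  refine hodd.not_exists_int_mul_eq_four (by omega) ⟨q, ?_⟩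
  rw [hαβ, hββ] at hq
  linarith
end
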